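/- Let A be a unital C*-algebra and let v ∈ A satisfy v v* v = v. For x ∈ A define Φ(x) = (1/2) · [[v x v*, v x], [x v*, v* v x]] ∈ M₂(A). Then for all e, f ∈ A that commute with v* v, one has Φ(e) · Φ(f) = Φ(e f). -/

import Mathlib

noncomputable def stmt10Phi {A : Type*} [CStarAlgebra A] (v x : A) :
    Matrix (Fin 2) (Fin 2) A :=
  (1 / 2 : ℝ) • !![v * x * star v, v * x; x * star v, star v * v * x]

/-!
If `v w v = v` and `w v w = w`, then `p = w v` is idempotent, and for `x` commuting with `p`
the identities `v x w v = v x` and `w v x w = x w` hold. With these, each entry of the product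
of the unscaled blocks `[[v e w, v e], [e w, w v e]] · [[v f w, v f], [f w, w v f]]` is a sum of
two copies of the corresponding entry of the block of `e f`; the factor `1/2` absorbs the `2`.
For a partial isometry take `w = v*`.
-/

section GenInvBlock

variable {R : Type*} [Ring R] {v w x e f : R}

def genInvBlock (v w x : R) : Matrix (Fin 2) (Fin 2) R :=
  !![v * x * w, v * x; x * w, w * v * x]

theorem mul_mul_mul_cancel_right_of_commute (hv : v * w * v = v) (hx : Commute x (w * v)) :
    v * x * w * v = v * x :=
  calc v * x * w * v = v * (x * (w * v)) := by simp only [mul_assoc]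
    _ = v * w * v * x := by rw [hx.eq]; simp only [mul_assoc]
    _ = v * x := by rw [hv]

theorem mul_mul_mul_cancel_left_of_commute (hw : w * v * w = w) (hx : Commute x (w * v)) :
    w * v * x * w = x * w :=
  calc w * v * x * w = x * (w * v * w) := by rw [← hx.eq]; simp only [mul_assoc]
    _ = x * w := by rw [hw]

theorem isIdempotentElem_mul_of_mul_mul_self (hw : w * v * w = w) :
    IsIdempotentElem (w * v) := by
  rw [IsIdempotentElem, ← mul_assoc, hw]

theorem genInvBlock_mul_genInvBlock (hv : v * w * v = v) (hw : w * v * w = w)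
    (he : Commute e (w * v)) (hf : Commute f (w * v)) :
    genInvBlock v w e * genInvBlock v w f = (2 : ℕ) • genInvBlock v w (e * f) := by
  have hvew : v * e * w * v = v * e := mul_mul_mul_cancel_right_of_commute hv he
  have h00 : v * e * w * (v * f * w) + v * e * (f * w) = 2 • (v * (e * f) * w) := by
    rw [two_nsmul, show v * e * w * (v * f * w) = v * e * w * v * f * w by
      simp only [mul_assoc], hvew]
    simp only [mul_assoc]
  have h01 : v * e * w * (v * f) + v * e * (w * v * f) = 2 • (v * (e * f)) := by
    rw [two_nsmul, show v * e * w * (v * f) = v * e * w * v * f by simp only [mul_assoc],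
      show v * e * (w * v * f) = v * e * w * v * f by simp only [mul_assoc], hvew]
    simp only [mul_assoc]
  have h10 : e * w * (v * f * w) + w * v * e * (f * w) = 2 • (e * f * w) := by
    rw [two_nsmul, show e * w * (v * f * w) = e * (w * v * f * w) by simp only [mul_assoc],
      mul_mul_mul_cancel_left_of_commute hw hf,
      show w * v * e * (f * w) = w * v * (e * f) * w by simp only [mul_assoc],
      mul_mul_mul_cancel_left_of_commute hw (he.mul_left hf)]
    simp only [mul_assoc]
  have h11 : e * w * (v * f) + w * v * e * (w * v * f) = 2 • (w * v * (e * f)) := by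
    rw [two_nsmul, show e * w * (v * f) = e * (w * v) * f by simp only [mul_assoc],
      show w * v * e * (w * v * f) = e * (w * v * (w * v)) * f by
        rw [← he.eq]; simp only [mul_assoc],
      (isIdempotentElem_mul_of_mul_mul_self hw).eq, he.eq]
    simp only [mul_assoc]
  rw [genInvBlock, genInvBlock, genInvBlock, Matrix.mul_fin_two, h00, h01, h10, h11]
  simp only [Matrix.smul_of, Matrix.smul_cons, Matrix.smul_empty]

end GenInvBlock

/-- Let `A` be a unital C*-algebra and let `v ∈ A` be a partial
isometry, i.e. `v v* v = v`. For `x ∈ A` set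
`Φ(x) = (1/2) · [[v x v*, v x], [x v*, v* v x]] ∈ M₂(A)`. Then for all `e, f ∈ A`
commuting with `v* v`, one has `Φ(e) · Φ(f) = Φ(e f)`. -/
theorem stmt10 {A : Type*} [CStarAlgebra A] (v : A) (hv : v * star v * v = v)
    (e f : A) (he : Commute e (star v * v)) (hf : Commute f (star v * v)) :
    stmt10Phi v e * stmt10Phi v f = stmt10Phi v (e * f) := by
  have hv' : star v * v * star v = star v := by
    simpa only [star_mul, star_star, mul_assoc] using congrArg star hv
  have hphi (x : A) : stmt10Phi v x = (1 / 2 : ℝ) • genInvBlock v (star v) x := rfl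
  rw [hphi, hphi, hphi, Matrix.smul_mul, Matrix.mul_smul, smul_smul,
    genInvBlock_mul_genInvBlock hv hv' he hf, ← Nat.cast_smul_eq_nsmul ℝ, smul_smul]
  norm_num
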